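/- Gamma-nonnegativity of the Eulerian polynomials (Foata–Schützenberger): for every n ≥ 1, there exist nonnegative integers γ_{n,i} for 1 ≤ i ≤ ⌈n/2⌉ such that A_n(t) = Σ_{i=1}^{⌈n/2⌉} γ_{n,i} · t^i · (1+t)^{n+1-2i}. -/

import Mathlib

/-!
Inserting the new maximum `n + 1` into a permutation `u` of `[n]` with `d` descents keeps `d`
descents if it goes at the end or right after a descent (`d + 1` slots) and creates one more
descent at each of the other `n - d` slots. Summing over all insertions gives the recurrence
`A_{n+1} = T_{n+1} A_n` with `T_m f = X (1 - X) f' + m X f`. A direct computation shows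
`T_m (X^i (1+X)^(m-2i)) = i X^i (1+X)^(m+1-2i) + 2 (m-2i) X^(i+1) (1+X)^(m-1-2i)`,
so `T_m` maps nonnegative combinations of the gamma basis of degree `m` to nonnegative
combinations of the gamma basis of degree `m + 1`; the theorem follows by induction from `A_1 = X`.
-/

/-- The descent number of a permutation of `Fin n`. -/
def des {n : ℕ} (w : Equiv.Perm (Fin n)) : ℕ :=
  (Finset.univ.filter fun r : Fin n =>
    ∃ s : Fin n, (s : ℕ) = (r : ℕ) + 1 ∧ w s < w r).card

/-- The `n`-th Eulerian polynomial `A_n(t) = ∑_{w ∈ S_n} t^{des(w)+1}`. -/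
noncomputable def eulerianPoly (n : ℕ) : Polynomial ℤ :=
  ∑ w : Equiv.Perm (Fin n), (Polynomial.X : Polynomial ℤ) ^ (des w + 1)

open Finset Polynomial

section Descents

variable {α : Type*} [LinearOrder α] {n : ℕ}

def descentSet (f : Fin n → α) : Finset (Fin n) :=
  {r | ∃ s : Fin n, (s : ℕ) = r + 1 ∧ f s < f r}

theorem mem_descentSet {f : Fin n → α} {r : Fin n} :
    r ∈ descentSet f ↔ ∃ s : Fin n, (s : ℕ) = r + 1 ∧ f s < f r := by
  simp [descentSet]

theorem val_add_one_lt_of_mem_descentSet {f : Fin n → α} {r : Fin n} (hr : r ∈ descentSet f) :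
    (r : ℕ) + 1 < n := by
  obtain ⟨s, hs, -⟩ := mem_descentSet.1 hr
  omega

theorem descentSet_comp_of_strictMono {β : Type*} [LinearOrder β] {g : α → β}
    (hg : StrictMono g) (f : Fin n → α) : descentSet (g ∘ f) = descentSet f := by
  ext r
  simp only [mem_descentSet, Function.comp_apply, hg.lt_iff_lt]

theorem val_succAbove_eq_val_succAbove_add_one_iff (p : Fin (n + 1)) (j k : Fin n) :
    (p.succAbove k : ℕ) = p.succAbove j + 1 ↔ (k : ℕ) = j + 1 ∧ p ≠ j.succ := by
  simp only [Fin.succAbove, Fin.lt_def, Fin.val_castSucc, ne_eq, Fin.ext_iff, Fin.val_succ]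
  split_ifs <;> simp <;> omega

variable {f : Fin n → α} {M : α}

theorem mem_descentSet_insertNth_self (hM : ∀ i, f i < M) (p : Fin (n + 1)) :
    p ∈ descentSet (Fin.insertNth p M f) ↔ p ≠ Fin.last n := by
  rw [mem_descentSet, Fin.insertNth_apply_same, Ne, Fin.ext_iff, Fin.val_last]
  constructor
  · rintro ⟨s, hs, -⟩
    omega
  · intro hp
    have hs : (⟨p + 1, by omega⟩ : Fin (n + 1)) ≠ p := fun h => by simp [Fin.ext_iff] at h
    obtain ⟨k, hk⟩ := Fin.exists_succAbove_eq hs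
    exact ⟨p.succAbove k, by rw [hk], by rw [Fin.insertNth_apply_succAbove]; exact hM k⟩

theorem succAbove_mem_descentSet_insertNth (hM : ∀ i, f i < M) (p : Fin (n + 1)) (j : Fin n) :
    p.succAbove j ∈ descentSet (Fin.insertNth p M f) ↔ j ∈ descentSet f ∧ p ≠ j.succ := by
  simp only [mem_descentSet, Fin.insertNth_apply_succAbove]
  constructor
  · rintro ⟨s, hs, hlt⟩
    obtain rfl | ⟨k, rfl⟩ := Fin.eq_self_or_eq_succAbove p s
    · exact absurd hlt (by simpa using (hM j).le)
    rw [Fin.insertNth_apply_succAbove] at hlt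
    obtain ⟨hk, hp⟩ := (val_succAbove_eq_val_succAbove_add_one_iff p j k).1 hs
    exact ⟨⟨k, hk, hlt⟩, hp⟩
  · rintro ⟨⟨k, hk, hlt⟩, hp⟩
    exact ⟨p.succAbove k, (val_succAbove_eq_val_succAbove_add_one_iff p j k).2 ⟨hk, hp⟩,
      by rwa [Fin.insertNth_apply_succAbove]⟩

theorem card_descentSet_insertNth (hM : ∀ i, f i < M) (p : Fin (n + 1)) :
    #(descentSet (Fin.insertNth p M f)) =
      (if p = Fin.last n then 0 else 1) + #{j ∈ descentSet f | p ≠ j.succ} := by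
  have h_card (s : Finset (Fin (n + 1))) : #s = ∑ r, if r ∈ s then 1 else 0 := by simp
  rw [h_card, Fin.sum_univ_succAbove _ p]
  simp_rw [mem_descentSet_insertNth_self hM, succAbove_mem_descentSet_insertNth hM]
  congr 1
  · exact ite_not _ _ _
  · rw [sum_boole, Nat.cast_id, ← filter_filter, filter_mem_eq_inter, univ_inter]

/-- Slot `p : Fin (n + 1)` is the gap just before position `p`. -/
def descentSlots (f : Fin n → α) : Finset (Fin (n + 1)) :=
  insert (Fin.last n) ((descentSet f).map (Fin.succEmb n))

theorem card_descentSlots (f : Fin n → α) : #(descentSlots f) = #(descentSet f) + 1 := by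
  rw [descentSlots, card_insert_of_notMem, card_map]
  simp only [mem_map, Fin.coe_succEmb, not_exists, not_and]
  intro j hj hlast
  have := congrArg Fin.val hlast
  simp only [Fin.val_succ, Fin.val_last] at this
  exact (val_add_one_lt_of_mem_descentSet hj).ne this

theorem card_descentSet_insertNth_eq (hM : ∀ i, f i < M) (p : Fin (n + 1)) :
    #(descentSet (Fin.insertNth p M f)) =
      #(descentSet f) + if p ∈ descentSlots f then 0 else 1 := by
  rw [card_descentSet_insertNth hM]
  by_cases hp : p ∈ descentSlots f
  · rw [if_pos hp]
    obtain rfl | ⟨j₀, hj₀, rfl⟩ := by simpa [descentSlots] using hp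
    · rw [if_pos rfl, filter_true_of_mem, zero_add, add_zero]
      intro j hj
      simpa [Fin.ext_iff] using (val_add_one_lt_of_mem_descentSet hj).ne'
    · have hlt := val_add_one_lt_of_mem_descentSet hj₀
      have herase : {j ∈ descentSet f | j₀.succ ≠ j.succ} = (descentSet f).erase j₀ := by
        ext j
        simp [Fin.ext_iff, and_comm, eq_comm]
      rw [if_neg (by simp [Fin.ext_iff]; omega), herase, card_erase_of_mem hj₀]
      have := card_pos.2 ⟨j₀, hj₀⟩
      omega
  · rw [if_neg hp, if_neg (by rintro rfl; exact hp (mem_insert_self _ _)),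
      filter_true_of_mem, add_comm]
    rintro j hj rfl
    exact hp (by rw [descentSlots]; exact mem_insert_of_mem (mem_map_of_mem _ hj))

theorem sum_pow_card_descentSet_insertNth {R : Type*} [CommSemiring R] (x : R)
    (hM : ∀ i, f i < M) :
    ∑ p, x ^ #(descentSet (Fin.insertNth p M f)) =
      (#(descentSet f) + 1 : ℕ) * x ^ #(descentSet f) +
        (n - #(descentSet f) : ℕ) * x ^ (#(descentSet f) + 1) := by
  have h_slots : ∑ p ∈ descentSlots f, x ^ #(descentSet (Fin.insertNth p M f)) =
      ∑ p ∈ descentSlots f, x ^ #(descentSet f) :=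
    sum_congr rfl fun p hp => by rw [card_descentSet_insertNth_eq hM, if_pos hp, add_zero]
  have h_others : ∑ p ∈ (descentSlots f)ᶜ, x ^ #(descentSet (Fin.insertNth p M f)) =
      ∑ p ∈ (descentSlots f)ᶜ, x ^ (#(descentSet f) + 1) :=
    sum_congr rfl fun p hp => by rw [card_descentSet_insertNth_eq hM, if_neg (mem_compl.1 hp)]
  rw [← sum_add_sum_compl (descentSlots f), h_slots, h_others, sum_const, sum_const, card_compl,
    card_descentSlots, nsmul_eq_mul, nsmul_eq_mul, Fintype.card_fin]
  congr 3
  omega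

end Descents

namespace Equiv.Perm

variable {n : ℕ}

def insertMax (u : Perm (Fin n)) (p : Fin (n + 1)) : Perm (Fin (n + 1)) :=
  (finSuccEquiv' p).trans ((optionCongr u).trans (finSuccEquiv' (Fin.last n)).symm)

theorem coe_insertMax (u : Perm (Fin n)) (p : Fin (n + 1)) :
    ⇑(insertMax u p) = Fin.insertNth p (Fin.last n) (Fin.castSucc ∘ u) := by
  ext x
  obtain rfl | ⟨j, rfl⟩ := Fin.eq_self_or_eq_succAbove p x <;>
    simp [insertMax, Fin.succAbove_last]

theorem des_insertMax (u : Perm (Fin n)) (p : Fin (n + 1)) :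
    des (insertMax u p) = #(descentSet (Fin.insertNth p (Fin.last n) (Fin.castSucc ∘ u))) := by
  rw [des, coe_insertMax]
  rfl

theorem insertMax_bijective :
    Function.Bijective fun up : Perm (Fin n) × Fin (n + 1) ↦ insertMax up.1 up.2 := by
  rw [Fintype.bijective_iff_injective_and_card]
  refine ⟨fun ⟨u, p⟩ ⟨u', p'⟩ h => ?_,
    by simp [Fintype.card_perm, Nat.factorial_succ, mul_comm]⟩
  replace h := congrArg DFunLike.coe h
  simp only [coe_insertMax] at h
  obtain rfl : p = p' := by
    by_contra hne
    obtain ⟨j, rfl⟩ := Fin.exists_succAbove_eq hne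
    have h_at_p := congrFun h (p'.succAbove j)
    simp only [Fin.insertNth_apply_same, Fin.insertNth_apply_succAbove,
      Function.comp_apply] at h_at_p
    exact (Fin.castSucc_lt_last _).ne' h_at_p
  obtain ⟨-, h⟩ := Fin.insertNth_injective2 h
  obtain rfl : u = u' := Equiv.ext fun j => Fin.castSucc_injective n (congrFun h j)
  rfl

theorem sum_pow_des_insertMax {R : Type*} [CommSemiring R] (x : R) (u : Perm (Fin n)) :
    ∑ p, x ^ des (insertMax u p) =
      (des u + 1 : ℕ) * x ^ des u + (n - des u : ℕ) * x ^ (des u + 1) := by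
  simp_rw [des_insertMax]
  rw [sum_pow_card_descentSet_insertNth (f := Fin.castSucc ∘ u) x
      fun _ => Fin.castSucc_lt_last _,
    descentSet_comp_of_strictMono Fin.strictMono_castSucc]
  rfl

end Equiv.Perm

section GammaCone

variable (R : Type*) [CommRing R]

noncomputable def eulerianOp (m : ℕ) : R[X] →ₗ[R] R[X] :=
  LinearMap.mulLeft R (X * (1 - X)) ∘ₗ derivative + LinearMap.mulLeft R ((m : R[X]) * X)

noncomputable def gammaCone (m : ℕ) : Submodule ℕ R[X] :=
  Submodule.span ℕ ((fun i => X ^ i * (1 + X) ^ (m - 2 * i)) '' ↑(Icc 1 (m / 2)))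

variable {R}

theorem eulerianOp_apply (m : ℕ) (f : R[X]) :
    eulerianOp R m f = X * (1 - X) * derivative f + (m : R[X]) * X * f := rfl

-- For `k = 0` the second term vanishes, so the truncated `k - 1` is harmless.
theorem eulerianOp_X_pow_mul_one_add_X_pow (i k : ℕ) :
    eulerianOp R (2 * i + k) (X ^ i * (1 + X) ^ k) =
      i • (X ^ i * (1 + X) ^ (k + 1)) + (2 * k) • (X ^ (i + 1) * (1 + X) ^ (k - 1)) := by
  rcases i with _ | i <;> rcases k with _ | k <;>
    simp [eulerianOp_apply, derivative_mul, derivative_pow] <;> ring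

theorem X_pow_mul_one_add_X_pow_mem_gammaCone {m i : ℕ} (hi : 1 ≤ i) (him : 2 * i ≤ m) :
    X ^ i * (1 + X) ^ (m - 2 * i) ∈ gammaCone R m :=
  Submodule.subset_span ⟨i, by simp only [coe_Icc, Set.mem_Icc]; omega, rfl⟩

theorem eulerianOp_mem_gammaCone {m : ℕ} {f : R[X]} (hf : f ∈ gammaCone R m) :
    eulerianOp R m f ∈ gammaCone R (m + 1) := by
  induction hf using Submodule.span_induction with
  | mem f hf =>
    obtain ⟨i, hi, rfl⟩ := hf
    simp only [coe_Icc, Set.mem_Icc] at hi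
    obtain ⟨k, rfl⟩ : ∃ k, m = 2 * i + k := ⟨m - 2 * i, by omega⟩
    dsimp only
    rw [show 2 * i + k - 2 * i = k by omega, eulerianOp_X_pow_mul_one_add_X_pow]
    refine add_mem (Submodule.smul_mem _ _ ?_) ?_
    · convert X_pow_mul_one_add_X_pow_mem_gammaCone (R := R) (m := 2 * i + k + 1) hi.1
        (by omega) using 3
      omega
    · rcases k with _ | k
      · simp
      refine Submodule.smul_mem _ _ ?_
      convert X_pow_mul_one_add_X_pow_mem_gammaCone (R := R) (m := 2 * i + (k + 1) + 1)
        (i := i + 1) (by omega) (by omega) using 3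
      omega
  | zero => simp
  | add f g _ _ hf hg => simpa using add_mem hf hg
  | smul c f _ hf => rw [map_nsmul]; exact Submodule.smul_mem _ c hf

end GammaCone

theorem exists_eq_sum_nsmul_of_mem_span_image {ι M : Type*} [AddCommMonoid M] {v : ι → M}
    {s : Finset ι} {x : M} (hx : x ∈ Submodule.span ℕ (v '' s)) :
    ∃ c : ι → ℕ, x = ∑ i ∈ s, c i • v i := by
  obtain ⟨l, hl, rfl⟩ := (Finsupp.mem_span_image_iff_linearCombination ℕ).1 hx
  refine ⟨l, ?_⟩
  rw [Finsupp.linearCombination_apply]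
  exact Finsupp.sum_of_support_subset _ hl _ fun _ _ => zero_smul _ _

theorem eulerianPoly_succ (n : ℕ) :
    eulerianPoly (n + 1) = eulerianOp ℤ (n + 1) (eulerianPoly n) := by
  calc eulerianPoly (n + 1)
      = ∑ up : Equiv.Perm (Fin n) × Fin (n + 1), X ^ (des (up.1.insertMax up.2) + 1) :=
        (Fintype.sum_bijective _ Equiv.Perm.insertMax_bijective _ _ fun _ => rfl).symm
    _ = ∑ u : Equiv.Perm (Fin n), X * ∑ p, X ^ des (u.insertMax p) := by
        simp_rw [Fintype.sum_prod_type, pow_succ', mul_sum]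
    _ = eulerianOp ℤ (n + 1) (eulerianPoly n) := by
        rw [eulerianPoly, map_sum]
        refine sum_congr rfl fun u _ => ?_
        have h_le : des u ≤ n := (card_le_univ _).trans_eq (Fintype.card_fin n)
        rw [Equiv.Perm.sum_pow_des_insertMax, eulerianOp_apply, derivative_X_pow, C_eq_natCast,
          Nat.add_sub_cancel]
        push_cast [h_le]
        ring

theorem eulerianPoly_one : eulerianPoly 1 = X := by
  simp [eulerianPoly, des]

theorem eulerianPoly_mem_gammaCone {n : ℕ} (hn : 1 ≤ n) :
    eulerianPoly n ∈ gammaCone ℤ (n + 1) := by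
  induction n, hn using Nat.le_induction with
  | base =>
    simpa [eulerianPoly_one] using
      X_pow_mul_one_add_X_pow_mem_gammaCone (R := ℤ) (m := 2) le_rfl le_rfl
  | succ n _ ih =>
    rw [eulerianPoly_succ]
    exact eulerianOp_mem_gammaCone ih

/-- Gamma-nonnegativity (Foata–Schützenberger): there exist nonnegative
integers `γ_{n,i}`, `1 ≤ i ≤ ⌈n/2⌉`, with
`A_n(t) = ∑_i γ_{n,i} t^i (1+t)^{n+1-2i}`.  (Here `⌈n/2⌉ = (n+1)/2` in
natural number arithmetic.) -/
theorem eulerianPoly_gamma_nonneg (n : ℕ) (hn : 1 ≤ n) :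
    ∃ γ : ℕ → ℕ,
      eulerianPoly n =
        ∑ i ∈ Finset.Icc 1 ((n + 1) / 2),
          (γ i : Polynomial ℤ) * Polynomial.X ^ i *
            (1 + Polynomial.X) ^ (n + 1 - 2 * i) := by
  obtain ⟨γ, hγ⟩ := exists_eq_sum_nsmul_of_mem_span_image (eulerianPoly_mem_gammaCone hn)
  refine ⟨γ, hγ.trans (sum_congr rfl fun i _ => ?_)⟩
  rw [nsmul_eq_mul, mul_assoc]
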